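/- The Rényi α-divergence between two multivariate Gaussians N(μ_1, σ²I_k) and N(μ_2, σ²I_k) equals α ||μ_1 - μ_2||_2² / (2σ²). Consequently, if ||q(D) - q(D')||_2 ≤ Δ for all neighboring D ~ D' and σ² ≥ α Δ² / (2ε), then the mechanism releasing N(q(D), σ²I_k) satisfies (α, ε)-RDP. -/

import Mathlib

open MeasureTheory Real

/-- Density of the multivariate Gaussian `N(μ, σ² I_k)` on `ℝ^k`. -/
noncomputable def gaussPdf {k : ℕ} (μ : EuclideanSpace ℝ (Fin k)) (σ2 : ℝ)
    (x : EuclideanSpace ℝ (Fin k)) : ℝ :=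
  (2 * π * σ2) ^ (-(k : ℝ) / 2) * Real.exp (-‖x - μ‖ ^ 2 / (2 * σ2))

/-- Rényi `α`-divergence between `N(μ₁, σ²I)` and `N(μ₂, σ²I)`,
`D_α(P₁‖P₂) = (α-1)⁻¹ log ∫ P₁(x)^α P₂(x)^(1-α) dx`. -/
noncomputable def renyiDivGauss {k : ℕ} (α : ℝ)
    (μ₁ μ₂ : EuclideanSpace ℝ (Fin k)) (σ2 : ℝ) : ℝ :=
  (α - 1)⁻¹ *
    Real.log (∫ x : EuclideanSpace ℝ (Fin k),
      gaussPdf μ₁ σ2 x ^ α * gaussPdf μ₂ σ2 x ^ (1 - α))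

/-!
Completing the square, `gaussPdf μ₁ ^ α * gaussPdf μ₂ ^ (1 - α)` is the constant
`exp (α (α - 1) ‖μ₁ - μ₂‖² / (2σ²))` times the Gaussian density centred at
`α μ₁ + (1 - α) μ₂`, which integrates to `1`. Taking `(α - 1)⁻¹ log` gives the closed form,
and the privacy bound is monotonicity of `α ‖μ₁ - μ₂‖² / (2σ²)` in `‖μ₁ - μ₂‖`.
-/

lemma mul_norm_sub_sq_add_mul_norm_sub_sq {E : Type*} [NormedAddCommGroup E]
    [InnerProductSpace ℝ E] (α : ℝ) (a b x : E) :
    α * ‖x - a‖ ^ 2 + (1 - α) * ‖x - b‖ ^ 2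
      = ‖x - (α • a + (1 - α) • b)‖ ^ 2 + α * (1 - α) * ‖a - b‖ ^ 2 := by
  have hxa : x - a = (x - b) - (a - b) := by abel
  have hxc : x - (α • a + (1 - α) • b) = (x - b) - α • (a - b) := by
    rw [smul_sub, sub_smul, one_smul]; abel
  rw [hxa, hxc]
  generalize x - b = y
  generalize a - b = d
  rw [norm_sub_sq_real, norm_sub_sq_real, real_inner_smul_right, norm_smul, mul_pow,
    Real.norm_eq_abs, sq_abs]
  ring

lemma integral_gaussPdf {k : ℕ} (μ : EuclideanSpace ℝ (Fin k)) {σ2 : ℝ} (hσ2 : 0 < σ2) :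
    ∫ x, gaussPdf μ σ2 x = 1 := by
  have hexp : ∀ y : EuclideanSpace ℝ (Fin k),
      -‖y - μ‖ ^ 2 / (2 * σ2) = -(2 * σ2)⁻¹ * ‖y - μ‖ ^ 2 := fun y ↦ by field_simp
  have hπ : π / (2 * σ2)⁻¹ = 2 * π * σ2 := by field_simp
  simp only [gaussPdf, hexp]
  rw [integral_const_mul, integral_sub_right_eq_self (fun y ↦ rexp (-(2 * σ2)⁻¹ * ‖y‖ ^ 2)),
    GaussianFourier.integral_rexp_neg_mul_sq_norm (by positivity), finrank_euclideanSpace_fin,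
    hπ, ← rpow_add (by positivity), neg_div, neg_add_cancel, rpow_zero]

lemma gaussPdf_rpow_mul_gaussPdf_rpow {k : ℕ} (α : ℝ) (μ₁ μ₂ : EuclideanSpace ℝ (Fin k))
    {σ2 : ℝ} (hσ2 : 0 < σ2) (x : EuclideanSpace ℝ (Fin k)) :
    gaussPdf μ₁ σ2 x ^ α * gaussPdf μ₂ σ2 x ^ (1 - α)
      = rexp (α * (α - 1) * ‖μ₁ - μ₂‖ ^ 2 / (2 * σ2))
        * gaussPdf (α • μ₁ + (1 - α) • μ₂) σ2 x := by
  set c := (2 * π * σ2) ^ (-(k : ℝ) / 2)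
  have hc : 0 < c := by positivity
  have hconst : c ^ α * c ^ (1 - α) = c := by
    rw [← rpow_add hc, add_sub_cancel, rpow_one]
  have hexp : -‖x - μ₁‖ ^ 2 / (2 * σ2) * α + -‖x - μ₂‖ ^ 2 / (2 * σ2) * (1 - α)
      = α * (α - 1) * ‖μ₁ - μ₂‖ ^ 2 / (2 * σ2)
        + -‖x - (α • μ₁ + (1 - α) • μ₂)‖ ^ 2 / (2 * σ2) := by
    field_simp
    linear_combination -mul_norm_sub_sq_add_mul_norm_sub_sq α μ₁ μ₂ x
  simp only [gaussPdf]
  rw [mul_rpow hc.le (exp_pos _).le, mul_rpow hc.le (exp_pos _).le, ← exp_mul, ← exp_mul,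
    mul_mul_mul_comm, hconst, ← exp_add, hexp, exp_add]
  ring

lemma renyiDivGauss_eq {k : ℕ} {α : ℝ} (hα : α ≠ 1) (μ₁ μ₂ : EuclideanSpace ℝ (Fin k))
    {σ2 : ℝ} (hσ2 : 0 < σ2) :
    renyiDivGauss α μ₁ μ₂ σ2 = α * ‖μ₁ - μ₂‖ ^ 2 / (2 * σ2) := by
  have hα1 : α - 1 ≠ 0 := sub_ne_zero.mpr hα
  simp only [renyiDivGauss, gaussPdf_rpow_mul_gaussPdf_rpow α μ₁ μ₂ hσ2]
  rw [integral_const_mul, integral_gaussPdf _ hσ2, mul_one, log_exp]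
  field_simp

lemma renyiDivGauss_le_of_norm_sub_le {k : ℕ} {α : ℝ} (hα : 1 < α)
    {μ₁ μ₂ : EuclideanSpace ℝ (Fin k)} {σ2 Δ ε : ℝ} (hσ2 : 0 < σ2) (hε : 0 < ε)
    (hμ : ‖μ₁ - μ₂‖ ≤ Δ) (hσΔ : α * Δ ^ 2 / (2 * ε) ≤ σ2) :
    renyiDivGauss α μ₁ μ₂ σ2 ≤ ε := by
  have hsq : ‖μ₁ - μ₂‖ ^ 2 ≤ Δ ^ 2 := pow_le_pow_left₀ (norm_nonneg _) hμ 2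
  rw [div_le_iff₀ (by positivity)] at hσΔ
  rw [renyiDivGauss_eq hα.ne' μ₁ μ₂ hσ2, div_le_iff₀ (by positivity)]
  calc α * ‖μ₁ - μ₂‖ ^ 2 ≤ α * Δ ^ 2 := by gcongr
    _ ≤ ε * (2 * σ2) := by linarith

/-- The Rényi `α`-divergence between `N(μ₁,σ²I_k)` and `N(μ₂,σ²I_k)` equals
`α‖μ₁-μ₂‖²/(2σ²)`; consequently the Gaussian mechanism with
`σ² ≥ αΔ²/(2ε)` satisfies `(α,ε)`-RDP. -/
theorem renyiDivGauss_eq_and_gaussian_mechanism_rdp {k : ℕ} (α σ2 : ℝ)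
    (hα : 1 < α) (hσ2 : 0 < σ2) :
    (∀ μ₁ μ₂ : EuclideanSpace ℝ (Fin k),
      renyiDivGauss α μ₁ μ₂ σ2 = α * ‖μ₁ - μ₂‖ ^ 2 / (2 * σ2)) ∧
    (∀ {Dataset : Type} (Nbr : Dataset → Dataset → Prop)
      (q : Dataset → EuclideanSpace ℝ (Fin k)) (Δ ε : ℝ), 0 < ε →
      (∀ D D', Nbr D D' → ‖q D - q D'‖ ≤ Δ) →
      σ2 ≥ α * Δ ^ 2 / (2 * ε) →
      ∀ D D', Nbr D D' → renyiDivGauss α (q D) (q D') σ2 ≤ ε) :=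
  ⟨fun μ₁ μ₂ ↦ renyiDivGauss_eq hα.ne' μ₁ μ₂ hσ2,
    fun _ _ _ _ hε hsens hσΔ D D' hDD' ↦
      renyiDivGauss_le_of_norm_sub_le hα hσ2 hε (hsens D D' hDD') hσΔ⟩
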